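/- arXiv:2405.14846 — 2 statements merged into one kernel-verified Lean document; each statement's English description precedes it below -/
import Mathlib

section
/- Let a and b be nonzero real numbers and assume that the ratio a/b satisfies a Roth-type Diophantine bound with exponent 5/2: there exists a constant C₀ > 0 such that |a/b − p/q| ≥ C₀·q^{−5/2} for every integer p and every integer q ≥ 1. Then there exists a constant C > 0 such that for every real number k ≥ 1, |e^{ika} + e^{ikb} − 2| ≥ C·k^{−4}. -/
/-!
Write `θ = k a`, `φ = k b` and `‖·‖` for the distance to `2πℤ`. The real part of the sum
gives `‖e^{iθ} + e^{iφ} - 2‖ ≥ (1 - cos θ) + (1 - cos φ) ≥ (2/π²) (‖θ‖² + ‖φ‖²)`.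
If `θ ≈ 2πm` and `φ ≈ 2πn` with `n ≠ 0`, then `m/n` approximates `a/b = θ/φ` to within
about `max(‖θ‖, ‖φ‖) / (k |n|)`, while `|m|, |n| = O(k)`; the bound
`|a/b - m/n| ≥ C₀ |n|^{-5/2}` therefore forces `max(‖θ‖, ‖φ‖) ≳ k^{-3/2}`.
If `n = 0`, then already `‖φ‖ = k |b| ≥ |b|`.
-/

open Real

def IsDiophantine (α μ C : ℝ) : Prop :=
  ∀ p q : ℤ, 1 ≤ q → C * (q : ℝ) ^ (-μ) ≤ |α - p / q|

namespace IsDiophantine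

variable {α μ C : ℝ}

theorem ne_zero (h : IsDiophantine α μ C) (hC : 0 < C) : α ≠ 0 := by
  rintro rfl
  have := h 0 1 le_rfl
  norm_num at this
  linarith

theorem le_abs_sub_div (h : IsDiophantine α μ C) (p : ℤ) {q : ℤ} (hq : q ≠ 0) :
    C * |(q : ℝ)| ^ (-μ) ≤ |α - p / q| := by
  rcases hq.lt_or_gt with hneg | hpos
  · have := h (-p) (-q) (by omega)
    push_cast at this
    rwa [neg_div_neg_eq, ← abs_of_neg (by exact_mod_cast hneg : (q : ℝ) < 0)] at this
  · simpa [abs_of_pos (by exact_mod_cast hpos : (0 : ℝ) < q)] using h p q hpos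

end IsDiophantine

theorem abs_round_le (x : ℝ) : |(round x : ℝ)| ≤ |x| + 1 / 2 := by
  have := abs_sub_abs_le_abs_sub (round x : ℝ) x
  rw [abs_sub_comm] at this
  linarith [abs_sub_round x]

theorem abs_div_sub_div_le (x y t : ℝ) (m n : ℤ) (hy : y ≠ 0) (hn : (n : ℝ) ≠ 0) :
    |x / y - m / n| ≤
      (|x - m * t| * |(n : ℝ)| + |y - n * t| * |(m : ℝ)|) / (|y| * |(n : ℝ)|) := by
  rw [div_sub_div _ _ hy hn, abs_div, abs_mul]
  gcongr
  calc |x * n - y * m| = |(x - m * t) * n - (y - n * t) * m| := by ring_nf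
    _ ≤ _ := by rw [← abs_mul, ← abs_mul]; exact abs_sub _ _

theorem Real.cos_le_one_sub_mul_norm_sq (θ : ℝ) :
    cos θ ≤ 1 - 2 / π ^ 2 * ‖(θ : AddCircle (2 * π))‖ ^ 2 := by
  have hθ := AddCircle.norm_le_half_period (2 * π) two_pi_pos.ne' (x := θ)
  rw [AddCircle.norm_eq] at hθ ⊢
  rw [← cos_sub_int_mul_two_pi θ (round ((2 * π)⁻¹ * θ)), sq_abs]
  exact cos_le_one_sub_mul_cos_sq (hθ.trans (by rw [abs_of_pos two_pi_pos]; linarith))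

theorem one_sub_cos_add_one_sub_cos_le_norm (θ φ : ℝ) :
    (1 - cos θ) + (1 - cos φ) ≤
      ‖Complex.exp (Complex.I * θ) + Complex.exp (Complex.I * φ) - 2‖ := by
  refine le_trans (le_of_eq ?_) ((neg_le_abs _).trans (Complex.abs_re_le_norm _))
  simp [Complex.exp_re, mul_comm Complex.I]
  ring

theorem two_div_pi_sq_mul_max_norm_sq_le (θ φ : ℝ) :
    2 / π ^ 2 * max ‖(θ : AddCircle (2 * π))‖ ‖(φ : AddCircle (2 * π))‖ ^ 2 ≤
      ‖Complex.exp (Complex.I * θ) + Complex.exp (Complex.I * φ) - 2‖ := by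
  have hmax : max ‖(θ : AddCircle (2 * π))‖ ‖(φ : AddCircle (2 * π))‖ ^ 2 ≤
      ‖(θ : AddCircle (2 * π))‖ ^ 2 + ‖(φ : AddCircle (2 * π))‖ ^ 2 := by
    rcases max_choice ‖(θ : AddCircle (2 * π))‖ ‖(φ : AddCircle (2 * π))‖ with h | h <;>
      rw [h] <;> nlinarith
  have := mul_le_mul_of_nonneg_left hmax (by positivity : (0 : ℝ) ≤ 2 / π ^ 2)
  linarith [cos_le_one_sub_mul_norm_sq θ, cos_le_one_sub_mul_norm_sq φ,
    one_sub_cos_add_one_sub_cos_le_norm θ φ]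

section AddCircle

variable {p : ℝ}

theorem IsDiophantine.mul_rpow_neg_le_max_norm {x y μ C N : ℝ} (hμ : 1 ≤ μ)
    (h : IsDiophantine (x / y) μ C) (hC : 0 < C) (hy : y ≠ 0)
    (hn : round (p⁻¹ * y) ≠ 0)
    (hN : |(round (p⁻¹ * x) : ℝ)| + |(round (p⁻¹ * y) : ℝ)| ≤ N) :
    C * |y| * N ^ (-μ) ≤ max ‖(x : AddCircle p)‖ ‖(y : AddCircle p)‖ := by
  set m := round (p⁻¹ * x)
  set n := round (p⁻¹ * y)
  set η := max ‖(x : AddCircle p)‖ ‖(y : AddCircle p)‖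
  have hn' : (n : ℝ) ≠ 0 := by exact_mod_cast hn
  have hn_pos : 0 < |(n : ℝ)| := abs_pos.mpr hn'
  have hnN : |(n : ℝ)| ≤ N := by linarith [abs_nonneg (m : ℝ)]
  have hN_pos : 0 < N := hn_pos.trans_le hnN
  have hnum : |x - m * p| * |(n : ℝ)| + |y - n * p| * |(m : ℝ)| ≤ η * N := by
    rw [← AddCircle.norm_eq, ← AddCircle.norm_eq]
    calc _ ≤ η * |(n : ℝ)| + η * |(m : ℝ)| := by gcongr <;> simp [η]
      _ ≤ η * N := by rw [← mul_add]; gcongr; linarith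
  have happrox : C * |(n : ℝ)| ^ (-μ) * (|y| * |(n : ℝ)|) ≤ η * N := by
    rw [← le_div_iff₀ (by positivity)]
    exact (h.le_abs_sub_div m hn).trans <|
      (abs_div_sub_div_le x y p m n hy hn').trans (by gcongr)
  have hpow : N ^ (-μ + 1) ≤ |(n : ℝ)| ^ (-μ + 1) :=
    rpow_le_rpow_of_nonpos hn_pos hnN (by linarith)
  rw [rpow_add_one hN_pos.ne', rpow_add_one hn_pos.ne'] at hpow
  rw [← mul_le_mul_iff_of_pos_right hN_pos]
  calc C * |y| * N ^ (-μ) * N = C * |y| * (N ^ (-μ) * N) := by ring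
    _ ≤ C * |y| * (|(n : ℝ)| ^ (-μ) * |(n : ℝ)|) := by gcongr
    _ = C * |(n : ℝ)| ^ (-μ) * (|y| * |(n : ℝ)|) := by ring
    _ ≤ η * N := happrox

theorem IsDiophantine.exists_mul_rpow_le_max_norm {a b μ C : ℝ} (hp : 0 < p) (hμ : 1 ≤ μ)
    (h : IsDiophantine (a / b) μ C) (hC : 0 < C) :
    ∃ c > 0, ∀ k : ℝ, 1 ≤ k →
      c * k ^ (1 - μ) ≤ max ‖((k * a : ℝ) : AddCircle p)‖ ‖((k * b : ℝ) : AddCircle p)‖ := by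
  have hb : b ≠ 0 := (div_ne_zero_iff.mp (h.ne_zero hC)).2
  set M := (|a| + |b|) / p + 1
  have hM : 0 < M := by positivity
  refine ⟨min |b| (C * |b| * M ^ (-μ)), by positivity, fun k hk => ?_⟩
  have hk0 : 0 < k := one_pos.trans_le hk
  have hk_pow : k ^ (1 - μ) ≤ 1 := rpow_le_one_of_one_le_of_nonpos hk (by linarith)
  by_cases hn : round (p⁻¹ * (k * b)) = 0
  · have hnorm : ‖((k * b : ℝ) : AddCircle p)‖ = k * |b| := by
      rw [AddCircle.norm_eq, hn]; simp [abs_mul, abs_of_pos hk0]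
    calc min |b| (C * |b| * M ^ (-μ)) * k ^ (1 - μ) ≤ |b| * 1 := by
          gcongr; exact min_le_left _ _
      _ ≤ k * |b| := by nlinarith [abs_nonneg b]
      _ ≤ _ := hnorm ▸ le_max_right _ _
  · have hN : |(round (p⁻¹ * (k * a)) : ℝ)| + |(round (p⁻¹ * (k * b)) : ℝ)| ≤ k * M := by
      have ha' := abs_round_le (p⁻¹ * (k * a))
      have hb' := abs_round_le (p⁻¹ * (k * b))
      simp only [abs_mul, abs_inv, abs_of_pos hp, abs_of_pos hk0] at ha' hb'
      have hsum : p⁻¹ * (k * |a|) + p⁻¹ * (k * |b|) = k * ((|a| + |b|) / p) := by ring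
      nlinarith [abs_nonneg a, abs_nonneg b]
    rw [← mul_div_mul_left a b hk0.ne'] at h
    refine le_trans ?_ (h.mul_rpow_neg_le_max_norm hμ hC (by positivity) hn hN)
    calc min |b| (C * |b| * M ^ (-μ)) * k ^ (1 - μ) ≤ C * |b| * M ^ (-μ) * k ^ (-μ + 1) := by
          rw [neg_add_eq_sub]; gcongr; exact min_le_right _ _
      _ = C * |k * b| * (k * M) ^ (-μ) := by
          rw [rpow_add_one hk0.ne', mul_rpow hk0.le hM.le, abs_mul, abs_of_pos hk0]; ring

end AddCircle

theorem exp_sum_lower_bound_of_roth_general (a b : ℝ)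
    (hroth : ∃ C₀ > (0 : ℝ), ∀ p : ℤ, ∀ q : ℤ, 1 ≤ q →
      C₀ * (q : ℝ) ^ (-(5 / 2 : ℝ)) ≤ |a / b - (p : ℝ) / (q : ℝ)|) :
    ∃ C > (0 : ℝ), ∀ k : ℝ, 1 ≤ k →
      C * k ^ (-(4 : ℝ)) ≤
        ‖Complex.exp (Complex.I * ((k * a : ℝ) : ℂ)) +
            Complex.exp (Complex.I * ((k * b : ℝ) : ℂ)) - 2‖ := by
  obtain ⟨C₀, hC₀, hdioph⟩ := hroth
  obtain ⟨c, hc, hnorm⟩ :=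
    IsDiophantine.exists_mul_rpow_le_max_norm two_pi_pos (by norm_num) hdioph hC₀
  refine ⟨2 / π ^ 2 * c ^ 2, by positivity, fun k hk => ?_⟩
  have hk_sq : (c * k ^ (1 - 5 / 2 : ℝ)) ^ 2 = c ^ 2 * k ^ (-3 : ℝ) := by
    rw [mul_pow, ← rpow_natCast (k ^ _), ← rpow_mul (by positivity)]; norm_num
  calc 2 / π ^ 2 * c ^ 2 * k ^ (-(4 : ℝ)) ≤ 2 / π ^ 2 * (c ^ 2 * k ^ (-3 : ℝ)) := by
        rw [mul_assoc]; gcongr; norm_num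
    _ ≤ 2 / π ^ 2 * max ‖((k * a : ℝ) : AddCircle (2 * π))‖
          ‖((k * b : ℝ) : AddCircle (2 * π))‖ ^ 2 := by
        rw [← hk_sq]; gcongr; exact hnorm k hk
    _ ≤ _ := two_div_pi_sq_mul_max_norm_sq_le _ _

/-- **Lower bound for `|e^{ika} + e^{ikb} − 2|` under a Roth-type condition on `a/b`.**
Let `a, b` be nonzero real numbers such that `|a/b − p/q| ≥ C₀·q^{−5/2}` for all
integers `p` and all integers `q ≥ 1` (some `C₀ > 0`).  Then there is `C > 0` with
`|e^{ika} + e^{ikb} − 2| ≥ C·k^{−4}` for every real `k ≥ 1`. -/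
theorem exp_sum_lower_bound_of_roth (a b : ℝ) (ha : a ≠ 0) (hb : b ≠ 0)
    (hroth : ∃ C₀ > (0 : ℝ), ∀ p : ℤ, ∀ q : ℤ, 1 ≤ q →
      C₀ * (q : ℝ) ^ (-(5 / 2 : ℝ)) ≤ |a / b - (p : ℝ) / (q : ℝ)|) :
    ∃ C > (0 : ℝ), ∀ k : ℝ, 1 ≤ k →
      C * k ^ (-(4 : ℝ)) ≤
        ‖Complex.exp (Complex.I * ((k * a : ℝ) : ℂ)) +
            Complex.exp (Complex.I * ((k * b : ℝ) : ℂ)) - 2‖ :=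
  exp_sum_lower_bound_of_roth_general a b hroth
end

section
/- Let α ∈ ℝ be irrational and let k be a nonzero integer. Then for every infinitely differentiable function g: ℝ → ℂ with g(x+1) = e^{2πikα}·g(x) for all x ∈ ℝ, there exists a unique infinitely differentiable function f: ℝ → ℂ with f(x+1) = e^{2πikα}·f(x) for all x ∈ ℝ and −f''(x) = g(x) for all x ∈ ℝ. In other words, for irrational α and k ≠ 0 the operator Δ_k = −d²/dx² is invertible on smooth (k,α)-twisted periodic functions. -/
/-!
Write `c = e^{2πikα}`; irrationality of `α` and `k ≠ 0` give exactly `c ≠ 1`. A continuous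
`c`-twisted periodic `u` has a `c`-twisted antiderivative: `F x = ∫₀ˣ u` satisfies
`F (x + 1) = F 1 + c F x`, and adding the constant `F 1 / (c - 1)` removes the defect.
Antidifferentiating `g` twice gives `-f`. Conversely a twisted function with vanishing
derivative is a constant `K` with `K = c K`, hence zero; applied to `(f₁ - f₂)'` and then to
`f₁ - f₂` this gives uniqueness.
-/

open scoped ContDiff

/-- Sections of the flat line bundle over `ℝ/ℤ` with monodromy `c`. -/
def TwistedPeriodic (c : ℂ) (f : ℝ → ℂ) : Prop :=
  ∀ x, f (x + 1) = c * f x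

namespace TwistedPeriodic

variable {c : ℂ} {f g : ℝ → ℂ}

theorem sub (hf : TwistedPeriodic c f) (hg : TwistedPeriodic c g) :
    TwistedPeriodic c (f - g) := fun x => by
  simp only [Pi.sub_apply, hf x, hg x, mul_sub]

theorem neg (hf : TwistedPeriodic c f) : TwistedPeriodic c (-f) := fun x => by
  simp only [Pi.neg_apply, hf x, mul_neg]

theorem eq_zero_of_deriv_eq_zero (hc : c ≠ 1) (hf : TwistedPeriodic c f)
    (hdiff : Differentiable ℝ f) (hderiv : deriv f = 0) : f = 0 := by
  have hconst : ∀ x, f x = f 0 := fun x =>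
    is_const_of_deriv_eq_zero hdiff (fun x => congrFun hderiv x) x 0
  have hfixed : f 0 * (1 - c) = 0 := by
    have h1 := hf 0
    rw [zero_add, hconst 1] at h1
    linear_combination h1
  have hzero : f 0 = 0 := (mul_eq_zero.mp hfixed).resolve_right (sub_ne_zero.mpr hc.symm)
  funext x
  rw [hconst x, hzero, Pi.zero_apply]

theorem exists_hasDerivAt (hc : c ≠ 1) (hf : TwistedPeriodic c f) (hcont : Continuous f) :
    ∃ F : ℝ → ℂ, TwistedPeriodic c F ∧ ∀ x, HasDerivAt F (f x) x := by
  set P : ℝ → ℂ := fun x => ∫ t in (0 : ℝ)..x, f t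
  have hP : ∀ x, P (x + 1) = P 1 + c * P x := fun x => by
    have hshift : ∫ t in (1 : ℝ)..x + 1, f t = c * P x := by
      have hsubst := intervalIntegral.integral_comp_add_right f (a := 0) (b := x) 1
      rw [zero_add] at hsubst
      rw [← hsubst, funext hf, intervalIntegral.integral_const_mul]
    rw [← hshift]
    exact (intervalIntegral.integral_add_adjacent_intervals (hcont.intervalIntegrable 0 1)
      (hcont.intervalIntegrable 1 (x + 1))).symm
  have hc' : c - 1 ≠ 0 := sub_ne_zero.mpr hc
  refine ⟨fun x => P x + P 1 / (c - 1), fun x => ?_, fun x => ?_⟩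
  · simp only [hP x]
    field_simp
    ring
  · exact (hcont.integral_hasStrictDerivAt 0 x).hasDerivAt.add_const _

theorem deriv (hf : TwistedPeriodic c f) : TwistedPeriodic c (deriv f) := fun x => by
  rw [← deriv_comp_add_const, funext hf, deriv_const_mul_field']

theorem eq_of_deriv_deriv_eq (hc : c ≠ 1) (hf : TwistedPeriodic c f) (hg : TwistedPeriodic c g)
    (hf₂ : ContDiff ℝ 2 f) (hg₂ : ContDiff ℝ 2 g)
    (h : _root_.deriv (_root_.deriv f) = _root_.deriv (_root_.deriv g)) : f = g := by
  have hderiv : _root_.deriv (f - g) = _root_.deriv f - _root_.deriv g := funext fun x =>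
    deriv_sub (hf₂.differentiable two_ne_zero x) (hg₂.differentiable two_ne_zero x)
  have hderiv₂ : _root_.deriv (_root_.deriv (f - g)) = 0 := calc
    _ = _root_.deriv (_root_.deriv f) - _root_.deriv (_root_.deriv g) := by
      rw [hderiv]
      exact funext fun x => deriv_sub (hf₂.differentiable_deriv_two x)
        (hg₂.differentiable_deriv_two x)
    _ = 0 := by rw [h, sub_self]
  have hderiv_zero : _root_.deriv (f - g) = 0 :=
    (hf.sub hg).deriv.eq_zero_of_deriv_eq_zero hc (hf₂.sub hg₂).differentiable_deriv_two
      hderiv₂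
  exact sub_eq_zero.mp <| (hf.sub hg).eq_zero_of_deriv_eq_zero hc
    ((hf₂.sub hg₂).differentiable two_ne_zero) hderiv_zero

end TwistedPeriodic

theorem exp_two_pi_I_mul_ne_one {α : ℝ} (hα : Irrational α) {k : ℤ} (hk : k ≠ 0) :
    Complex.exp (2 * (Real.pi : ℂ) * Complex.I * (k : ℂ) * (α : ℂ)) ≠ 1 := by
  rw [Ne, Complex.exp_eq_one_iff]
  rintro ⟨n, hn⟩
  have h2πI : 2 * (Real.pi : ℂ) * Complex.I ≠ 0 := by simp [Real.pi_ne_zero]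
  have hkα : ((k * α : ℝ) : ℂ) = n := by
    push_cast
    exact mul_left_cancel₀ h2πI (by linear_combination hn)
  exact (hα.intCast_mul hk).ne_int n (by exact_mod_cast hkα)

theorem contDiff_infty_of_hasDerivAt {𝕜 E : Type*} [NontriviallyNormedField 𝕜]
    [NormedAddCommGroup E] [NormedSpace 𝕜 E] {F f : 𝕜 → E}
    (hF : ∀ x, HasDerivAt F (f x) x) (hf : ContDiff 𝕜 ∞ f) : ContDiff 𝕜 ∞ F := by
  rw [contDiff_infty_iff_deriv]
  exact ⟨fun x => (hF x).differentiableAt, by rwa [funext fun x => (hF x).deriv]⟩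

/-- **Invertibility of the twisted Laplacian for irrational `α` and `k ≠ 0`.**
Let `α` be irrational and `k` a nonzero integer.  Then for every smooth
`(k,α)`-twisted periodic function `g : ℝ → ℂ` (i.e. `g(x+1) = e^{2πikα}·g(x)`) there
is a unique smooth `(k,α)`-twisted periodic function `f` with `−f'' = g`. -/
theorem twisted_laplacian_invertible (α : ℝ) (hα : Irrational α) (k : ℤ) (hk : k ≠ 0)
    (g : ℝ → ℂ) (hg : ContDiff ℝ (⊤ : ℕ∞) g)
    (hgtw : ∀ x : ℝ, g (x + 1) =
      Complex.exp (2 * (Real.pi : ℂ) * Complex.I * (k : ℂ) * (α : ℂ)) * g x) :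
    ∃! f : ℝ → ℂ, ContDiff ℝ (⊤ : ℕ∞) f ∧
      (∀ x : ℝ, f (x + 1) =
        Complex.exp (2 * (Real.pi : ℂ) * Complex.I * (k : ℂ) * (α : ℂ)) * f x) ∧
      ∀ x : ℝ, -deriv (deriv f) x = g x := by
  have hc := exp_two_pi_I_mul_ne_one hα hk
  obtain ⟨G₁, hG₁tw, hG₁⟩ := TwistedPeriodic.exists_hasDerivAt hc hgtw hg.continuous
  have hG₁smooth := contDiff_infty_of_hasDerivAt hG₁ hg
  obtain ⟨G₂, hG₂tw, hG₂⟩ := hG₁tw.exists_hasDerivAt hc hG₁smooth.continuous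
  have hG₂smooth := contDiff_infty_of_hasDerivAt hG₂ hG₁smooth
  have hG₂'' : deriv (deriv G₂) = g := by
    rw [funext fun x => (hG₂ x).deriv]
    exact funext fun x => (hG₁ x).deriv
  have hsol : ∀ x, -deriv (deriv (-G₂)) x = g x := fun x => by
    simp only [deriv.neg', deriv.fun_neg', hG₂'', neg_neg]
  refine ⟨-G₂, ⟨hG₂smooth.neg, hG₂tw.neg, hsol⟩, ?_⟩
  rintro f ⟨hf, hftw, hfeq⟩
  have htwo : (2 : ℕ∞ω) ≤ ∞ := WithTop.coe_le_coe.mpr le_top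
  refine TwistedPeriodic.eq_of_deriv_deriv_eq hc hftw hG₂tw.neg (hf.of_le htwo)
    (hG₂smooth.neg.of_le htwo) (funext fun x => ?_)
  linear_combination hsol x - hfeq x
end
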